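/- For every real number t there exists a constant l ∈ ℝ such that for all x ∈ (−√8, √8): 2·∫_{−√8}^{√8} log|x − y| · v_t(y) dy = x²/2 + t·x⁴/4 + l, the integral converging absolutely for each such x. (This is the Euler–Lagrange identity satisfied by the signed measure ν_t with density v_t minimizing the weighted logarithmic energy among signed measures of total mass one supported on [−√8, √8].) -/

import Mathlib

/-!
Substitute `y = √8 cos θ` and `x = √8 cos φ` with `θ, φ ∈ (0, π)`. The measure `v_t(y) dy`
becomes the trigonometric polynomial `(1 - (2 + 8t) cos 2θ - 4t cos 4θ) dθ / π`, and
`2 (cos φ - cos θ) = (2 sin ((θ - φ)/2)) (2 sin ((θ + φ)/2))` splits the kernel as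
`log |x - y| = log √2 + L(θ - φ) + L(θ + φ)` with `L(u) = log |2 sin (u/2)|`.
Against `cos nθ` on `[0, π]` the kernel therefore integrates to `cos nφ` times the Fourier
coefficient `∫₀^{2π} L(u) cos nu du = -π/n` (`n ≥ 1`), which follows by integrating by parts,
since `L'(u) sin nu = cos (u/2) ∑_{k<n} cos ((k + 1/2) u)` has integral `π`. The potential is thus
a polynomial in `cos 2φ` and `cos 4φ`, i.e. in `x²` and `x⁴`, and it equals `V_t(x)` up to
a constant.
-/

open MeasureTheory

/-- The density `v_t(y) = (8 − y²)^{3/2}/(24π) + (t + 1/12)(8 + 4y² − y⁴)/(2π√(8 − y²))` of the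
modified equilibrium measure. -/
noncomputable def vDens (t : ℝ) (y : ℝ) : ℝ :=
  (8 - y ^ 2) ^ ((3 : ℝ) / 2) / (24 * Real.pi)
    + (t + 1 / 12) * (8 + 4 * y ^ 2 - y ^ 4) / (2 * Real.pi * Real.sqrt (8 - y ^ 2))

open Real intervalIntegral Set

theorem integral_cos_nat_mul_of_ne_zero {k : ℕ} (hk : k ≠ 0) (m : ℕ) :
    ∫ x in 0..m * π, cos (k * x) = 0 := by
  have hk' : (k : ℝ) ≠ 0 := Nat.cast_ne_zero.2 hk
  rw [integral_comp_mul_left (fun x => cos x) hk', integral_cos,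
    show (k : ℝ) * (m * π) = ((k * m : ℕ) : ℝ) * π by push_cast; ring, sin_nat_mul_pi]
  simp

theorem sin_nat_mul_eq_sin_half_mul_sum (n : ℕ) (u : ℝ) :
    sin (n * u) = 2 * sin (u / 2) * ∑ k ∈ Finset.range n, cos ((k + 1 / 2) * u) := by
  induction n with
  | zero => simp
  | succ n ih =>
    rw [Finset.sum_range_succ, mul_add, ← ih, Nat.cast_succ,
      show ((n : ℝ) + 1) * u = (n + 1 / 2) * u + u / 2 by ring,
      show (n : ℝ) * u = (n + 1 / 2) * u - u / 2 by ring, sin_add, sin_sub]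
    ring

theorem integral_cos_half_mul_sum {n : ℕ} (hn : n ≠ 0) :
    ∫ u in 0..2 * π, cos (u / 2) * ∑ k ∈ Finset.range n, cos ((k + 1 / 2) * u) = π := by
  have hprod : ∀ u : ℝ, cos (u / 2) * ∑ k ∈ Finset.range n, cos ((k + 1 / 2) * u)
      = ∑ k ∈ Finset.range n, (cos (k * u) + cos ((k + 1 : ℕ) * u)) / 2 := by
    intro u
    rw [Finset.mul_sum]
    refine Finset.sum_congr rfl fun k _ => ?_
    rw [Nat.cast_succ, show ((k : ℝ) + 1) * u = (k + 1 / 2) * u + u / 2 by ring,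
      show (k : ℝ) * u = (k + 1 / 2) * u - u / 2 by ring, cos_add, cos_sub]
    ring
  have hcos : ∀ k : ℕ, ∫ u in 0..2 * π, cos (k * u) = if k = 0 then 2 * π else 0 := by
    intro k
    split_ifs with hk
    · simp [hk]
    · exact_mod_cast integral_cos_nat_mul_of_ne_zero hk 2
  have hterm : ∀ k : ℕ, ∫ u in 0..2 * π, (cos (k * u) + cos ((k + 1 : ℕ) * u)) / 2
      = if k = 0 then π else 0 := by
    intro k
    rw [intervalIntegral.integral_div, intervalIntegral.integral_add
      ((by fun_prop : Continuous _).intervalIntegrable _ _)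
      ((by fun_prop : Continuous _).intervalIntegrable _ _), hcos, hcos]
    split_ifs <;> simp_all
  simp_rw [hprod]
  rw [intervalIntegral.integral_finsetSum
      fun k _ => (by fun_prop : Continuous _).intervalIntegrable _ _,
    Finset.sum_congr rfl fun k _ => hterm k, Finset.sum_ite_eq' (Finset.range n) 0]
  simp [Nat.pos_of_ne_zero hn]

section Periodic

variable {f : ℝ → ℝ}

theorem integral_comp_add_mul_cos_of_periodic (hper : Function.Periodic f (2 * π))
    (hf : ∀ a b, IntervalIntegrable f volume a b) (n : ℕ) (ψ : ℝ) :
    ∫ θ in 0..2 * π, f (θ + ψ) * cos (n * θ) =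
      cos (n * ψ) * (∫ u in 0..2 * π, f u * cos (n * u))
        + sin (n * ψ) * ∫ u in 0..2 * π, f u * sin (n * u) := by
  have hshift : Function.Periodic (fun u => f u * cos (n * (u - ψ))) (2 * π) := fun u => by
    simp only [hper u, show (n : ℝ) * (u + 2 * π - ψ) = n * (u - ψ) + n * (2 * π) by ring,
      (cos_periodic.nat_mul n) _]
  calc ∫ θ in 0..2 * π, f (θ + ψ) * cos (n * θ)
      = ∫ u in ψ..ψ + 2 * π, f u * cos (n * (u - ψ)) := by
        simpa [add_comm ψ] using
          integral_comp_add_right (a := 0) (b := 2 * π) (fun u => f u * cos (n * (u - ψ))) ψ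
    _ = ∫ u in 0..2 * π, f u * cos (n * (u - ψ)) := by
        simpa using hshift.intervalIntegral_add_eq ψ 0
    _ = ∫ u in 0..2 * π, (cos (n * ψ) * (f u * cos (n * u)) + sin (n * ψ) * (f u * sin (n * u))) :=
        integral_congr fun u _ => by simp only [mul_sub, cos_sub]; ring
    _ = _ := by
        rw [intervalIntegral.integral_add (((hf _ _).mul_continuousOn
            (by fun_prop : Continuous _).continuousOn).const_mul _)
            (((hf _ _).mul_continuousOn (by fun_prop : Continuous _).continuousOn).const_mul _),
          intervalIntegral.integral_const_mul, intervalIntegral.integral_const_mul]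

theorem integral_zero_two_pi_eq_two_mul_of_even (hper : Function.Periodic f (2 * π))
    (heven : Function.Even f) (hf : ∀ a b, IntervalIntegrable f volume a b) :
    ∫ u in 0..2 * π, f u = 2 * ∫ u in 0..π, f u := by
  have hneg : ∫ u in -π..0, f u = ∫ u in 0..π, f u := by
    simpa [heven _] using (integral_comp_neg (a := 0) (b := π) f).symm
  rw [← zero_add (2 * π), hper.intervalIntegral_add_eq 0 (-π), show -π + 2 * π = π by ring,
    ← integral_add_adjacent_intervals (hf _ _) (hf _ _), hneg]
  ring

-- The integrand is even in `θ`, so `∫₀^π` is half of `∫₀^{2π}`, where the sine parts cancel.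
theorem integral_comp_sub_add_comp_add_mul_cos (hper : Function.Periodic f (2 * π))
    (heven : Function.Even f) (hf : ∀ a b, IntervalIntegrable f volume a b) (n : ℕ) (φ : ℝ) :
    ∫ θ in 0..π, (f (θ - φ) + f (θ + φ)) * cos (n * θ) =
      cos (n * φ) * ∫ u in 0..2 * π, f u * cos (n * u) := by
  have hshift : ∀ ψ a b, IntervalIntegrable (fun θ => f (θ + ψ) * cos (n * θ)) volume a b :=
    fun ψ a b => by
      simpa using ((hf (a + ψ) (b + ψ)).comp_add_right ψ).mul_continuousOn
        (by fun_prop : Continuous fun θ : ℝ => cos (n * θ)).continuousOn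
  have hsum : ∀ a b,
      IntervalIntegrable (fun θ => (f (θ - φ) + f (θ + φ)) * cos (n * θ)) volume a b :=
    fun a b => by simpa [sub_eq_add_neg, add_mul] using (hshift (-φ) a b).add (hshift φ a b)
  rw [eq_comm, ← mul_right_inj' (two_ne_zero (α := ℝ)),
    ← integral_zero_two_pi_eq_two_mul_of_even _ _ hsum]
  · simp only [add_mul]
    rw [intervalIntegral.integral_add (by simpa [sub_eq_add_neg] using hshift (-φ) _ _)
      (hshift φ _ _)]
    simp only [sub_eq_add_neg, integral_comp_add_mul_cos_of_periodic hper hf, mul_neg, cos_neg,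
      sin_neg]
    ring
  · intro θ
    simp only [show (n : ℝ) * (θ + 2 * π) = n * θ + n * (2 * π) by ring, (cos_periodic.nat_mul n) _,
      show θ + 2 * π - φ = θ - φ + 2 * π by ring, show θ + 2 * π + φ = θ + φ + 2 * π by ring,
      hper _]
  · intro θ
    simp only [mul_neg, cos_neg, show -θ - φ = -(θ + φ) by ring, show -θ + φ = -(θ - φ) by ring,
      heven _]
    ring

end Periodic

/-- `Real.log` takes absolute values, so this is `log |2 sin (u/2)| = log |1 - exp (i u)|`. -/
noncomputable def logChord (u : ℝ) : ℝ := log (2 * sin (u / 2))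

theorem logChord_even : Function.Even logChord := fun u => by
  simp [logChord, neg_div, log_neg_eq_log]

theorem logChord_periodic : Function.Periodic logChord (2 * π) := fun u => by
  simp [logChord, add_div, sin_add_pi, log_neg_eq_log]

theorem intervalIntegrable_logChord (a b : ℝ) : IntervalIntegrable logChord volume a b := by
  have : MeromorphicOn (fun u : ℝ => 2 * sin (u / 2)) (uIcc a b) := fun u _ =>
    (by fun_prop : AnalyticAt ℝ (fun u : ℝ => 2 * sin (u / 2)) u).meromorphicAt
  exact this.intervalIntegrable_log

theorem intervalIntegrable_logChord_mul {g : ℝ → ℝ} (hg : Continuous g) (a b : ℝ) :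
    IntervalIntegrable (fun u => logChord u * g u) volume a b :=
  (intervalIntegrable_logChord a b).mul_continuousOn hg.continuousOn

theorem continuous_logChord_mul_sin (n : ℕ) : Continuous fun u => logChord u * sin (n * u) := by
  have : (fun u => logChord u * sin (n * u)) = fun u =>
      (2 * sin (u / 2)) * log (2 * sin (u / 2)) * ∑ k ∈ Finset.range n, cos ((k + 1 / 2) * u) := by
    funext u; rw [sin_nat_mul_eq_sin_half_mul_sum, logChord]; ring
  rw [this]
  exact (continuous_mul_log.comp (by fun_prop)).mul (by fun_prop)

theorem hasDerivAt_logChord {u : ℝ} (h : sin (u / 2) ≠ 0) :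
    HasDerivAt logChord (cos (u / 2) / (2 * sin (u / 2))) u := by
  have := ((((hasDerivAt_id u).div_const 2).sin).const_mul 2).log (by simpa using h)
  simp only [id] at this
  exact this.congr_deriv (by field_simp)

-- Integration by parts against `logChord u * sin (n u)`, which is continuous and vanishes at `0`
-- and `2π`.
theorem integral_logChord_mul_cos {n : ℕ} (hn : n ≠ 0) :
    ∫ u in 0..2 * π, logChord u * cos (n * u) = -(π / n) := by
  set D : ℝ → ℝ := fun u => cos (u / 2) * ∑ k ∈ Finset.range n, cos ((k + 1 / 2) * u)
  have hderiv : ∀ u ∈ Ioo 0 (2 * π),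
      HasDerivAt (fun u => logChord u * sin (n * u)) (D u + n * (logChord u * cos (n * u))) u := by
    intro u hu
    have hsin : sin (u / 2) ≠ 0 :=
      (sin_pos_of_pos_of_lt_pi (by linarith [hu.1]) (by linarith [hu.2])).ne'
    refine ((hasDerivAt_logChord hsin).mul
      (((hasDerivAt_id u).const_mul (n : ℝ)).sin)).congr_deriv ?_
    simp only [D, id, mul_one, sin_nat_mul_eq_sin_half_mul_sum n u]
    field_simp
  have hD : IntervalIntegrable D volume 0 (2 * π) :=
    (by fun_prop : Continuous D).intervalIntegrable _ _
  have hFTC := integral_eq_sub_of_hasDerivAt_of_le two_pi_pos.le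
    (continuous_logChord_mul_sin n).continuousOn hderiv
    (hD.add ((intervalIntegrable_logChord_mul (by fun_prop) _ _).const_mul _))
  rw [intervalIntegral.integral_add hD
      ((intervalIntegrable_logChord_mul (by fun_prop) _ _).const_mul _),
    intervalIntegral.integral_const_mul, integral_cos_half_mul_sum hn,
    show (n : ℝ) * (2 * π) = ((2 * n : ℕ) : ℝ) * π by push_cast; ring, sin_nat_mul_pi] at hFTC
  simp only [mul_zero, sin_zero, sub_self] at hFTC
  have hn' : (n : ℝ) ≠ 0 := Nat.cast_ne_zero.2 hn
  field_simp
  linarith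

theorem log_abs_two_mul_cos_sub_cos {θ φ : ℝ} (h : cos θ ≠ cos φ) :
    log |2 * (cos φ - cos θ)| = logChord (θ - φ) + logChord (θ + φ) := by
  have hfac : 2 * (cos φ - cos θ) = 2 * sin ((θ - φ) / 2) * (2 * sin ((θ + φ) / 2)) := by
    rw [cos_sub_cos, show (φ - θ) / 2 = -((θ - φ) / 2) by ring, sin_neg, add_comm φ]
    ring
  have hne : 2 * sin ((θ - φ) / 2) * (2 * sin ((θ + φ) / 2)) ≠ 0 := by
    rw [← hfac]; exact mul_ne_zero two_ne_zero (sub_ne_zero.2 h.symm)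
  rw [hfac, log_abs, log_mul (left_ne_zero_of_mul hne) (right_ne_zero_of_mul hne)]
  rfl

theorem intervalIntegrable_logChord_sub_add (φ a b : ℝ) :
    IntervalIntegrable (fun θ => logChord (θ - φ) + logChord (θ + φ)) volume a b := by
  have hshift : ∀ ψ, IntervalIntegrable (fun θ => logChord (θ + ψ)) volume a b := fun ψ => by
    simpa using (intervalIntegrable_logChord (a + ψ) (b + ψ)).comp_add_right ψ
  simpa [sub_eq_add_neg] using (hshift (-φ)).add (hshift φ)

theorem integral_const_add_logChord_sub_add_mul_cos {n : ℕ} (hn : n ≠ 0) (c φ : ℝ) :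
    ∫ θ in 0..π, (c + (logChord (θ - φ) + logChord (θ + φ))) * cos (n * θ)
      = -(π / n) * cos (n * φ) := by
  have hcos := integral_cos_nat_mul_of_ne_zero hn 1
  rw [Nat.cast_one, one_mul] at hcos
  simp_rw [add_mul _ (_ + _)]
  rw [intervalIntegral.integral_add
      ((by fun_prop : Continuous fun θ : ℝ => c * cos (n * θ)).intervalIntegrable _ _)
      ((intervalIntegrable_logChord_sub_add φ 0 π).mul_continuousOn
        (by fun_prop : Continuous fun θ : ℝ => cos (n * θ)).continuousOn),
    intervalIntegral.integral_const_mul, hcos,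
    integral_comp_sub_add_comp_add_mul_cos logChord_periodic logChord_even
      intervalIntegrable_logChord, integral_logChord_mul_cos hn]
  ring

theorem integral_const_add_logChord_sub_add (c φ : ℝ) :
    ∫ θ in 0..π, (c + (logChord (θ - φ) + logChord (θ + φ)))
      = c * π + ∫ u in 0..2 * π, logChord u := by
  rw [intervalIntegral.integral_add intervalIntegrable_const
      (intervalIntegrable_logChord_sub_add φ 0 π),
    intervalIntegral.integral_const, smul_eq_mul, sub_zero, mul_comm π]
  simpa using integral_comp_sub_add_comp_add_mul_cos logChord_periodic logChord_even
    intervalIntegrable_logChord 0 φ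

theorem image_mul_cos_Ioo {R : ℝ} (hR : 0 < R) : (fun θ => R * cos θ) '' Ioo 0 π = Ioo (-R) R := by
  have hcos : cos '' Ioo 0 π = Ioo (-1) 1 := cosPartialHomeomorph.image_source_eq_target
  rw [← image_image (R * ·) cos, hcos, image_mul_left_Ioo hR]
  simp

theorem intervalIntegrable_and_integral_eq_of_mul_cos {R : ℝ} (hR : 0 < R) {G H : ℝ → ℝ}
    (hH : IntervalIntegrable H volume 0 π)
    (hGH : ∀ᵐ θ, θ ∈ Ioo 0 π → R * sin θ * G (R * cos θ) = H θ) :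
    IntervalIntegrable G volume (-R) R ∧ ∫ y in -R..R, G y = ∫ θ in 0..π, H θ := by
  have hderiv : ∀ θ ∈ Ioo 0 π,
      HasDerivWithinAt (fun θ => R * cos θ) (R * -sin θ) (Ioo 0 π) θ :=
    fun θ _ => ((hasDerivAt_cos θ).const_mul R).hasDerivWithinAt
  have hinj : InjOn (fun θ => R * cos θ) (Ioo 0 π) := fun a ha b hb hab =>
    injOn_cos (Ioo_subset_Icc_self ha) (Ioo_subset_Icc_self hb) (mul_left_cancel₀ hR.ne' hab)
  have hae : (fun θ => |R * -sin θ| • G (R * cos θ)) =ᵐ[volume.restrict (Ioo 0 π)] H := by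
    filter_upwards [ae_restrict_of_ae hGH, ae_restrict_mem measurableSet_Ioo] with θ h hθ
    rw [abs_mul, abs_neg, abs_of_pos hR, abs_of_pos (sin_pos_of_pos_of_lt_pi hθ.1 hθ.2),
      smul_eq_mul, ← h hθ, mul_assoc]
  constructor
  · rw [intervalIntegrable_iff_integrableOn_Ioo_of_le (by linarith), ← image_mul_cos_Ioo hR,
      integrableOn_image_iff_integrableOn_abs_deriv_smul measurableSet_Ioo hderiv hinj]
    exact ((intervalIntegrable_iff_integrableOn_Ioo_of_le pi_pos.le).1 hH).congr_fun_ae hae.symm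
  · rw [integral_of_le (by linarith), integral_of_le pi_pos.le, integral_Ioc_eq_integral_Ioo,
      integral_Ioc_eq_integral_Ioo, ← image_mul_cos_Ioo hR,
      integral_image_eq_integral_abs_deriv_smul measurableSet_Ioo hderiv hinj,
      integral_congr_ae hae]

noncomputable def vDensAngle (t θ : ℝ) : ℝ :=
  (1 - (2 + 8 * t) * cos (2 * θ) - 4 * t * cos (4 * θ)) / π

theorem sqrt_eight_mul_sin_mul_vDens {θ : ℝ} (hθ : 0 < sin θ) (t : ℝ) :
    √8 * sin θ * vDens t (√8 * cos θ) = vDensAngle t θ := by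
  have h8 : √8 ^ 2 = 8 := sq_sqrt (by norm_num)
  have hR : 0 < √8 * sin θ := by positivity
  have hsq : 8 - (√8 * cos θ) ^ 2 = (√8 * sin θ) ^ 2 := by
    rw [mul_pow, mul_pow, h8]; nlinarith [sin_sq_add_cos_sq θ]
  have hrpow : ((√8 * sin θ) ^ 2) ^ ((3 : ℝ) / 2) = (√8 * sin θ) ^ 3 := by
    rw [← rpow_natCast, ← rpow_mul hR.le, ← rpow_natCast]; norm_num
  have h64 : √8 ^ 4 = 64 := by rw [show 4 = 2 * 2 by rfl, pow_mul, h8]; norm_num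
  rw [vDens, hsq, hrpow, sqrt_sq hR.le, vDensAngle, show 4 * θ = 2 * (2 * θ) by ring,
    cos_two_mul (2 * θ), cos_two_mul θ]
  field_simp
  rw [h64, h8, show sin θ ^ 4 = (sin θ ^ 2) ^ 2 by ring, sin_sq]
  ring

theorem sqrt_eight_mul_sin_mul_log_mul_vDens {θ φ : ℝ} (hθ : 0 < sin θ) (hne : cos θ ≠ cos φ)
    (t : ℝ) : √8 * sin θ * (log |√8 * cos φ - √8 * cos θ| * vDens t (√8 * cos θ))
      = (log 2 / 2 + (logChord (θ - φ) + logChord (θ + φ))) * vDensAngle t θ := by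
  have h8 : √8 = √2 * 2 := by
    rw [show (8 : ℝ) = 2 * 2 ^ 2 by norm_num, sqrt_mul zero_le_two, sqrt_sq zero_le_two]
  have hne' : |2 * (cos φ - cos θ)| ≠ 0 :=
    abs_ne_zero.2 (mul_ne_zero two_ne_zero (sub_ne_zero.2 hne.symm))
  rw [show √8 * cos φ - √8 * cos θ = √2 * (2 * (cos φ - cos θ)) by rw [h8]; ring, abs_mul,
    log_mul (by positivity) hne', abs_of_pos (by positivity), log_sqrt zero_le_two,
    log_abs_two_mul_cos_sub_cos hne, ← sqrt_eight_mul_sin_mul_vDens hθ]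
  ring

theorem integral_mul_vDensAngle {F : ℝ → ℝ} (hF : IntervalIntegrable F volume 0 π) (t : ℝ) :
    ∫ θ in 0..π, F θ * vDensAngle t θ = ((∫ θ in 0..π, F θ)
      - (2 + 8 * t) * (∫ θ in 0..π, F θ * cos (2 * θ))
      - 4 * t * ∫ θ in 0..π, F θ * cos (4 * θ)) / π := by
  have hcos : ∀ c : ℝ, IntervalIntegrable (fun θ => F θ * cos (c * θ)) volume 0 π :=
    fun c => hF.mul_continuousOn (by fun_prop : Continuous _).continuousOn
  rw [← intervalIntegral.integral_const_mul, ← intervalIntegral.integral_const_mul,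
    ← intervalIntegral.integral_sub hF ((hcos 2).const_mul _),
    ← intervalIntegral.integral_sub (hF.sub ((hcos 2).const_mul _)) ((hcos 4).const_mul _),
    ← intervalIntegral.integral_div]
  exact integral_congr fun θ _ => by rw [vDensAngle]; ring

theorem intervalIntegrable_and_two_mul_integral_angle (t φ : ℝ) :
    IntervalIntegrable (fun θ => (log 2 / 2 + (logChord (θ - φ) + logChord (θ + φ)))
      * vDensAngle t θ) volume 0 π ∧
    2 * ∫ θ in 0..π, (log 2 / 2 + (logChord (θ - φ) + logChord (θ + φ))) * vDensAngle t θ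
      = (√8 * cos φ) ^ 2 / 2 + t * (√8 * cos φ) ^ 4 / 4
        + (log 2 + 2 / π * (∫ u in 0..2 * π, logChord u) - 2 - 6 * t) := by
  have hF :=
    intervalIntegrable_const (c := log 2 / 2).add (intervalIntegrable_logChord_sub_add φ 0 π)
  have h2 := integral_const_add_logChord_sub_add_mul_cos two_ne_zero (log 2 / 2) φ
  have h4 := integral_const_add_logChord_sub_add_mul_cos four_ne_zero (log 2 / 2) φ
  push_cast at h2 h4
  refine ⟨hF.mul_continuousOn (by unfold vDensAngle; fun_prop), ?_⟩
  rw [integral_mul_vDensAngle hF, integral_const_add_logChord_sub_add, h2, h4, mul_pow, mul_pow,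
    show (4 : ℝ) * φ = 2 * (2 * φ) by ring, cos_two_mul (2 * φ), cos_two_mul φ,
    sq_sqrt (by norm_num : (0 : ℝ) ≤ 8),
    show √8 ^ 4 = 64 by rw [show 4 = 2 * 2 by rfl, pow_mul, sq_sqrt (by norm_num)]; norm_num]
  field_simp
  ring

/-- The Euler–Lagrange identity: there is a constant `l` such that for all
`x ∈ (−√8, √8)`, `2∫ log|x − y| v_t(y) dy = x²/2 + t x⁴/4 + l`, the integral converging
absolutely. -/
theorem stmt11 (t : ℝ) :
    ∃ l : ℝ, ∀ x ∈ Set.Ioo (-Real.sqrt 8) (Real.sqrt 8),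
      IntervalIntegrable (fun y => Real.log |x - y| * vDens t y) volume
        (-Real.sqrt 8) (Real.sqrt 8) ∧
      2 * ∫ y in (-Real.sqrt 8)..(Real.sqrt 8), Real.log |x - y| * vDens t y
        = x ^ 2 / 2 + t * x ^ 4 / 4 + l := by
  refine ⟨log 2 + 2 / π * (∫ u in 0..2 * π, logChord u) - 2 - 6 * t, fun x hx => ?_⟩
  set φ := arccos (x / √8)
  have hxφ : √8 * cos φ = x := by
    have h8 : 0 < √8 := by positivity
    rw [cos_arccos ((le_div_iff₀ h8).2 (by linarith [hx.1])) ((div_le_one h8).2 hx.2.le)]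
    field_simp
  obtain ⟨hH, hval⟩ := intervalIntegrable_and_two_mul_integral_angle t φ
  have hae : ∀ᵐ θ, θ ∈ Ioo 0 π → √8 * sin θ * (log |x - √8 * cos θ| * vDens t (√8 * cos θ))
      = (log 2 / 2 + (logChord (θ - φ) + logChord (θ + φ))) * vDensAngle t θ := by
    filter_upwards [Measure.ae_ne volume φ] with θ hθφ hθ
    have hcos : cos θ ≠ cos φ := fun h => hθφ <|
      injOn_cos (Ioo_subset_Icc_self hθ) ⟨arccos_nonneg _, arccos_le_pi _⟩ h
    rw [← hxφ]
    exact sqrt_eight_mul_sin_mul_log_mul_vDens (sin_pos_of_pos_of_lt_pi hθ.1 hθ.2) hcos t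
  obtain ⟨hint, heq⟩ := intervalIntegrable_and_integral_eq_of_mul_cos (by positivity)
    (G := fun y => log |x - y| * vDens t y) hH hae
  exact ⟨hint, by rw [heq, hval, hxφ]⟩
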